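/- arXiv:2605.06009 — 5 statements merged into one kernel-verified Lean document; each statement's English description precedes it below -/
import Mathlib

section
/- Let ν, λ > 0 and let φ : [0,π] → ℝ be a C² solution of −ν φ'' + φ³ − λ φ = 0 with φ(0) = φ(π) = 0. Suppose there exists x₀ ∈ (0,π) with φ'(x₀) = 0. Then |φ'(0)| ≤ λ/√(2ν). -/
/-! Along a solution of `-ν φ'' + φ³ - λ φ = 0` the first integral
`E = -(ν/2) φ'² + φ⁴/4 - (λ/2) φ²` is constant. Comparing its values at `0`, where `φ = 0`,
and at a critical point `x₀`, where `φ' = 0`, gives `-(ν/2) φ'(0)² = φ(x₀)⁴/4 - (λ/2) φ(x₀)²`,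
and the right-hand side is at least `-λ²/4`, the minimum of `s ↦ s⁴/4 - (λ/2) s²`. -/

open Set

namespace AllenCahn

noncomputable def energy (ν lam : ℝ) (φ φ' : ℝ → ℝ) (x : ℝ) : ℝ :=
  -(ν / 2) * φ' x ^ 2 + φ x ^ 4 / 4 - lam / 2 * φ x ^ 2

theorem hasDerivAt_energy (ν lam : ℝ) {φ φ' : ℝ → ℝ} {x d' : ℝ}
    (hφ : HasDerivAt φ (φ' x) x) (hφ' : HasDerivAt φ' d' x) :
    HasDerivAt (energy ν lam φ φ') (φ' x * (-ν * d' + φ x ^ 3 - lam * φ x)) x := by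
  refine ((((hφ'.pow 2).const_mul (-(ν / 2))).add ((hφ.pow 4).div_const 4)).sub
    ((hφ.pow 2).const_mul (lam / 2))).congr_deriv ?_
  push_cast
  ring

theorem energy_eq_of_mem_Icc {ν lam a b : ℝ} {φ φ' φ'' : ℝ → ℝ}
    (hφ : ∀ x ∈ Icc a b, HasDerivAt φ (φ' x) x)
    (hφ' : ∀ x ∈ Icc a b, HasDerivAt φ' (φ'' x) x)
    (hode : ∀ x ∈ Icc a b, -ν * φ'' x + φ x ^ 3 - lam * φ x = 0) :
    ∀ x ∈ Icc a b, energy ν lam φ φ' x = energy ν lam φ φ' a := by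
  refine constant_of_has_deriv_right_zero (fun x hx => ?_) (fun x hx => ?_)
  · exact (hasDerivAt_energy ν lam (hφ x hx) (hφ' x hx)).continuousAt.continuousWithinAt
  · have hx' : x ∈ Icc a b := Ico_subset_Icc_self hx
    have hE := hasDerivAt_energy ν lam (hφ x hx') (hφ' x hx')
    rw [hode x hx', mul_zero] at hE
    exact hE.hasDerivWithinAt

theorem neg_sq_div_four_le (lam s : ℝ) : -(lam ^ 2 / 4) ≤ s ^ 4 / 4 - lam / 2 * s ^ 2 := by
  nlinarith [sq_nonneg (s ^ 2 - lam)]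

theorem abs_le_div_sqrt_of_sq_mul_le {p c lam : ℝ} (hc : 0 < c) (hlam : 0 ≤ lam)
    (h : p ^ 2 * c ≤ lam ^ 2) : |p| ≤ lam / √c := by
  rw [le_div_iff₀ (Real.sqrt_pos.mpr hc), ← Real.sqrt_sq_eq_abs, ← Real.sqrt_mul (sq_nonneg p)]
  exact Real.sqrt_le_iff.mpr ⟨hlam, h⟩

end AllenCahn

open AllenCahn in
theorem stmt4_general (ν lam : ℝ) (hν : 0 < ν) (hlam : 0 < lam)
    (φ φ' φ'' : ℝ → ℝ)
    (hφ : ∀ x ∈ Set.Icc (0:ℝ) Real.pi, HasDerivAt φ (φ' x) x)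
    (hφ' : ∀ x ∈ Set.Icc (0:ℝ) Real.pi, HasDerivAt φ' (φ'' x) x)
    (hode : ∀ x ∈ Set.Icc (0:ℝ) Real.pi, -ν * φ'' x + (φ x) ^ 3 - lam * φ x = 0)
    (h0 : φ 0 = 0)
    (hx₀ : ∃ x₀ ∈ Set.Ioo (0:ℝ) Real.pi, φ' x₀ = 0) :
    |φ' 0| ≤ lam / Real.sqrt (2 * ν) := by
  obtain ⟨x₀, hx₀, hcrit⟩ := hx₀
  have hE : energy ν lam φ φ' x₀ = energy ν lam φ φ' 0 :=
    energy_eq_of_mem_Icc hφ hφ' hode x₀ (Ioo_subset_Icc_self hx₀)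
  simp only [energy, hcrit, h0] at hE
  refine abs_le_div_sqrt_of_sq_mul_le (by positivity) hlam.le ?_
  nlinarith [neg_sq_div_four_le lam (φ x₀)]

theorem stmt4 (ν lam : ℝ) (hν : 0 < ν) (hlam : 0 < lam)
    (φ φ' φ'' : ℝ → ℝ)
    (hφ : ∀ x ∈ Set.Icc (0:ℝ) Real.pi, HasDerivAt φ (φ' x) x)
    (hφ' : ∀ x ∈ Set.Icc (0:ℝ) Real.pi, HasDerivAt φ' (φ'' x) x)
    (hode : ∀ x ∈ Set.Icc (0:ℝ) Real.pi, -ν * φ'' x + (φ x) ^ 3 - lam * φ x = 0)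
    (h0 : φ 0 = 0) (hpi : φ Real.pi = 0)
    (hx₀ : ∃ x₀ ∈ Set.Ioo (0:ℝ) Real.pi, φ' x₀ = 0) :
    |φ' 0| ≤ lam / Real.sqrt (2 * ν) :=
  stmt4_general ν lam hν hlam φ φ' φ'' hφ hφ' hode h0 hx₀
end

section
/- Let ν, λ > 0 with |θ| < λ/√(2ν), and let y solve −ν y'' + y³ − λ y = 0 with y(0) = 0, y'(0) = θ. Then wherever the solution is defined, (y')² = θ² + (1/(2ν)) y⁴ − (λ/ν) y², and y² ≤ λ − √(λ² − 2νθ²). In particular y and y' are bounded uniformly on the domain of existence. -/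
/-!
Multiplying the equation by `y'` shows that the energy `ν y'² + λ y² - y⁴ / 2` is conserved, so it
equals its initial value `ν θ²`. With `r = √(λ² - 2νθ²) > 0` this reads
`2ν y'² = (y² - λ)² - r²`, so `y²` never enters the gap `(λ - r, λ + r)`. Since `y²` is continuous on
an interval and starts at `0 ≤ λ - r`, it stays below `λ - r`; feeding `y² ≤ λ` back into the energy
gives `y'² ≤ θ²`.
-/

open Set

theorem Convex.eq_of_forall_hasDerivAt_zero {s : Set ℝ} (hs : Convex ℝ s) {f : ℝ → ℝ}
    (hf : ∀ x ∈ s, HasDerivAt f 0 x) {a x : ℝ} (ha : a ∈ s) (hx : x ∈ s) : f x = f a := by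
  have h := hs.norm_image_sub_le_of_norm_hasDerivWithin_le (C := 0)
    (fun z hz => (hf z hz).hasDerivWithinAt) (fun _ _ => by simp) ha hx
  simpa [sub_eq_zero] using h

theorem IsPreconnected.le_of_forall_notMem_Ioo {X α : Type*} [TopologicalSpace X] [LinearOrder α]
    [DenselyOrdered α] [TopologicalSpace α] [OrderClosedTopology α] {s : Set X}
    (hs : IsPreconnected s) {u : X → α} (hu : ContinuousOn u s) {a b : α} (hab : a < b)
    (hgap : ∀ x ∈ s, u x ∉ Ioo a b) {x₀ x : X} (hx₀ : x₀ ∈ s) (h₀ : u x₀ ≤ a) (hx : x ∈ s) :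
    u x ≤ a := by
  by_contra! hax
  have hbx : b ≤ u x := not_lt.mp fun hxb => hgap x hx ⟨hax, hxb⟩
  obtain ⟨m, ham, hmb⟩ := exists_between hab
  obtain ⟨c, hc, rfl⟩ := hs.intermediate_value hx₀ hx hu ⟨h₀.trans ham.le, hmb.le.trans hbx⟩
  exact hgap c hc ⟨ham, hmb⟩

section Energy

variable {ν lam : ℝ} {y y' y'' : ℝ → ℝ}

theorem hasDerivAt_energy {x : ℝ} (hy : HasDerivAt y (y' x) x) (hy' : HasDerivAt y' (y'' x) x)
    (hode : -ν * y'' x + y x ^ 3 - lam * y x = 0) :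
    HasDerivAt (fun t => ν * y' t ^ 2 + lam * y t ^ 2 - y t ^ 4 / 2) 0 x := by
  refine ((((hy'.fun_pow 2).const_mul ν).add ((hy.fun_pow 2).const_mul lam)).sub
    ((hy.fun_pow 4).div_const 2)).congr_deriv ?_
  push_cast
  linear_combination (-2 * y' x) * hode

theorem energy_eq_of_ode {s : Set ℝ} (hs : Convex ℝ s) (hy : ∀ x ∈ s, HasDerivAt y (y' x) x)
    (hy' : ∀ x ∈ s, HasDerivAt y' (y'' x) x)
    (hode : ∀ x ∈ s, -ν * y'' x + y x ^ 3 - lam * y x = 0) {a x : ℝ} (ha : a ∈ s) (hx : x ∈ s) :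
    ν * y' x ^ 2 + lam * y x ^ 2 - y x ^ 4 / 2 = ν * y' a ^ 2 + lam * y a ^ 2 - y a ^ 4 / 2 :=
  hs.eq_of_forall_hasDerivAt_zero (f := fun t => ν * y' t ^ 2 + lam * y t ^ 2 - y t ^ 4 / 2)
    (fun z hz => hasDerivAt_energy (hy z hz) (hy' z hz) (hode z hz)) ha hx

end Energy

theorem stmt5 (ν lam θ : ℝ) (hν : 0 < ν) (hlam : 0 < lam)
    (hθ : θ ^ 2 < lam ^ 2 / (2 * ν))
    (s : Set ℝ) (hs : Convex ℝ s) (h0s : (0:ℝ) ∈ s)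
    (y y' y'' : ℝ → ℝ)
    (hy : ∀ x ∈ s, HasDerivAt y (y' x) x)
    (hy' : ∀ x ∈ s, HasDerivAt y' (y'' x) x)
    (hode : ∀ x ∈ s, -ν * y'' x + (y x) ^ 3 - lam * y x = 0)
    (hy0 : y 0 = 0) (hy'0 : y' 0 = θ) :
    (∀ x ∈ s, (y' x) ^ 2 = θ ^ 2 + (1 / (2 * ν)) * (y x) ^ 4 - (lam / ν) * (y x) ^ 2) ∧
      (∀ x ∈ s, (y x) ^ 2 ≤ lam - Real.sqrt (lam ^ 2 - 2 * ν * θ ^ 2)) ∧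
      ∃ M : ℝ, ∀ x ∈ s, |y x| ≤ M ∧ |y' x| ≤ M := by
  have henergy : ∀ x ∈ s, ν * y' x ^ 2 + lam * y x ^ 2 - y x ^ 4 / 2 = ν * θ ^ 2 := fun x hx => by
    simpa [hy0, hy'0] using energy_eq_of_ode hs hy hy' hode h0s hx
  set r := Real.sqrt (lam ^ 2 - 2 * ν * θ ^ 2)
  have hdisc : 0 < lam ^ 2 - 2 * ν * θ ^ 2 := by
    rw [lt_div_iff₀ (by positivity)] at hθ; linarith
  have hr2 : r ^ 2 = lam ^ 2 - 2 * ν * θ ^ 2 := Real.sq_sqrt hdisc.le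
  have hr : 0 < r := Real.sqrt_pos.mpr hdisc
  have hgap : ∀ x ∈ s, y x ^ 2 ∉ Ioo (lam - r) (lam + r) := fun x hx ⟨h₁, h₂⟩ => by
    nlinarith [henergy x hx, mul_pos (sub_pos.2 h₁) (sub_pos.2 h₂), sq_nonneg (y' x)]
  have hbound : ∀ x ∈ s, y x ^ 2 ≤ lam - r := fun x hx =>
    hs.isPreconnected.le_of_forall_notMem_Ioo (u := fun t => y t ^ 2)
      (fun t ht => ((hy t ht).continuousAt.pow 2).continuousWithinAt) (by linarith) hgap h0s
      (by rw [hy0]; nlinarith) hx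
  have hy'sq : ∀ x ∈ s, y' x ^ 2 ≤ θ ^ 2 := fun x hx => by
    have := hbound x hx
    nlinarith [henergy x hx, mul_nonneg (sq_nonneg (y x)) (sq_nonneg (y x))]
  refine ⟨fun x hx => ?_, hbound, max (Real.sqrt (lam - r)) |θ|, fun x hx =>
    ⟨(Real.abs_le_sqrt (hbound x hx)).trans (le_max_left _ _),
      (sq_le_sq.mp (hy'sq x hx)).trans (le_max_right _ _)⟩⟩
  field_simp
  linear_combination 2 * henergy x hx
end

section
/- Let g : [0,∞) → ℝ be a nonnegative absolutely continuous function satisfying g'(t) + 2c₁ g(t)² ≤ c₂ for all t ≥ 0, where c₁, c₂ > 0. Set K₁ = (c₂/c₁)^{1/2}. If g(0) ≤ K₁ then g(t) ≤ K₁ for all t ≥ 0; moreover there exists a constant K, independent of g(0), such that g(t) ≤ K for all t ≥ 1/2. -/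
/-!
Write `K₁ = √(c₂ / c₁)`. Where `g = K₁` the inequality gives `g' ≤ -c₂ < 0`, so `g` can never
cross `K₁` upwards. Where `g > K₁` it gives `g' ≤ -c₁ g²`, i.e. `(1 / g)' ≥ c₁`. Hence if
`g t > K₁`, then `g > K₁` on all of `[0, t]`, so `1 / g t ≥ c₁ t` and `g t ≤ 2 / c₁` once `t ≥ 1 / 2`.
-/

open Set

theorem le_of_hasDerivAt_neg_at_level {f f' : ℝ → ℝ} {a b M : ℝ}
    (hf : ∀ x ∈ Icc a b, HasDerivAt f (f' x) x) (ha : f a ≤ M)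
    (hM : ∀ x ∈ Ico a b, f x = M → f' x < 0) : ∀ x ∈ Icc a b, f x ≤ M :=
  image_le_of_deriv_right_lt_deriv_boundary (B := fun _ ↦ M)
    (fun x hx ↦ (hf x hx).continuousAt.continuousWithinAt)
    (fun x hx ↦ (hf x (Ico_subset_Icc_self hx)).hasDerivWithinAt) ha
    (fun _ ↦ hasDerivAt_const _ M) hM

theorem mul_sub_le_inv_sub_inv_of_deriv_le_neg_mul_sq {f f' : ℝ → ℝ} {a b c : ℝ} (hab : a ≤ b)
    (hf : ∀ x ∈ Icc a b, HasDerivAt f (f' x) x) (hpos : ∀ x ∈ Icc a b, 0 < f x)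
    (hf' : ∀ x ∈ Ico a b, f' x ≤ -(c * f x ^ 2)) : c * (b - a) ≤ (f b)⁻¹ - (f a)⁻¹ := by
  have hinv : ∀ x ∈ Icc a b, HasDerivAt (fun y ↦ (f y)⁻¹ - (f a)⁻¹) (-f' x / f x ^ 2) x :=
    fun x hx ↦ ((hf x hx).inv (hpos x hx).ne').sub_const _
  refine image_le_of_deriv_right_le_deriv_boundary (f' := fun _ ↦ c)
    (fun x _ ↦ (continuous_const.mul (continuous_id.sub continuous_const)).continuousWithinAt)
    (fun x _ ↦ (((hasDerivAt_id x).sub_const a).const_mul c).hasDerivWithinAt.congr_deriv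
      (mul_one c)) (by simp) (fun x hx ↦ (hinv x hx).continuousAt.continuousWithinAt)
    (fun x hx ↦ (hinv x (Ico_subset_Icc_self hx)).hasDerivWithinAt) (fun x hx ↦ ?_)
    (right_mem_Icc.2 hab)
  have hx2 : 0 < f x ^ 2 := pow_pos (hpos x (Ico_subset_Icc_self hx)) 2
  rw [le_div_iff₀ hx2]
  linarith [hf' x hx]

section Riccati

variable {c₁ c₂ y y' : ℝ} {g g' : ℝ → ℝ}

theorem riccati_deriv_neg_of_eq_sqrt (hc₁ : 0 < c₁) (hc₂ : 0 < c₂)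
    (h : y' + 2 * c₁ * y ^ 2 ≤ c₂) (hy : y = √(c₂ / c₁)) : y' < 0 := by
  have : c₁ * y ^ 2 = c₂ := by
    rw [hy, Real.sq_sqrt (by positivity)]
    field_simp
  linarith

theorem riccati_deriv_le_neg_mul_sq_of_sqrt_lt (hc₁ : 0 < c₁)
    (h : y' + 2 * c₁ * y ^ 2 ≤ c₂) (hy : √(c₂ / c₁) < y) : y' ≤ -(c₁ * y ^ 2) := by
  have : c₂ < c₁ * y ^ 2 := by
    rw [← div_lt_iff₀' hc₁, ← Real.sqrt_lt' ((Real.sqrt_nonneg _).trans_lt hy)]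
    exact hy
  linarith

theorem riccati_le_sqrt_of_le (hc₁ : 0 < c₁) (hc₂ : 0 < c₂)
    (hg : ∀ t, 0 ≤ t → HasDerivAt g (g' t) t)
    (hineq : ∀ t, 0 ≤ t → g' t + 2 * c₁ * g t ^ 2 ≤ c₂) {s t : ℝ} (hs : 0 ≤ s) (hst : s ≤ t)
    (hgs : g s ≤ √(c₂ / c₁)) : g t ≤ √(c₂ / c₁) :=
  le_of_hasDerivAt_neg_at_level (fun x hx ↦ hg x (hs.trans hx.1)) hgs
    (fun x hx ↦ riccati_deriv_neg_of_eq_sqrt hc₁ hc₂ (hineq x (hs.trans hx.1)))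
    t ⟨hst, le_rfl⟩

end Riccati

theorem stmt6 (c₁ c₂ : ℝ) (hc₁ : 0 < c₁) (hc₂ : 0 < c₂) :
    (∀ g g' : ℝ → ℝ,
        (∀ t, 0 ≤ t → 0 ≤ g t) →
        (∀ t, 0 ≤ t → HasDerivAt g (g' t) t) →
        (∀ t, 0 ≤ t → g' t + 2 * c₁ * (g t) ^ 2 ≤ c₂) →
        g 0 ≤ Real.sqrt (c₂ / c₁) → ∀ t, 0 ≤ t → g t ≤ Real.sqrt (c₂ / c₁)) ∧
    ∃ K : ℝ, ∀ g g' : ℝ → ℝ,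
        (∀ t, 0 ≤ t → 0 ≤ g t) →
        (∀ t, 0 ≤ t → HasDerivAt g (g' t) t) →
        (∀ t, 0 ≤ t → g' t + 2 * c₁ * (g t) ^ 2 ≤ c₂) →
        ∀ t, 1 / 2 ≤ t → g t ≤ K := by
  refine ⟨fun g g' _ hg hineq h0 t ht ↦ riccati_le_sqrt_of_le hc₁ hc₂ hg hineq le_rfl ht h0,
    √(c₂ / c₁) + 2 / c₁, fun g g' _ hg hineq t ht ↦ ?_⟩
  have ht₀ : 0 ≤ t := by linarith
  by_contra! hgt
  have habove : ∀ x ∈ Icc 0 t, √(c₂ / c₁) < g x := fun x hx ↦ not_le.1 fun hx' ↦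
    (riccati_le_sqrt_of_le hc₁ hc₂ hg hineq hx.1 hx.2 hx').not_gt
      (lt_of_le_of_lt (by linarith [div_pos two_pos hc₁]) hgt)
  have hpos : ∀ x ∈ Icc 0 t, 0 < g x := fun x hx ↦ (Real.sqrt_nonneg _).trans_lt (habove x hx)
  have hdecay : c₁ * (t - 0) ≤ (g t)⁻¹ - (g 0)⁻¹ :=
    mul_sub_le_inv_sub_inv_of_deriv_le_neg_mul_sq ht₀ (fun x hx ↦ hg x hx.1) hpos
      fun x hx ↦ riccati_deriv_le_neg_mul_sq_of_sqrt_lt hc₁ (hineq x hx.1)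
        (habove x (Ico_subset_Icc_self hx))
  have hinv : c₁ / 2 < (g t)⁻¹ := by
    nlinarith [inv_pos.2 (hpos 0 ⟨le_rfl, ht₀⟩)]
  have : g t < 2 / c₁ := by
    rwa [lt_inv_comm₀ (by positivity) (hpos t ⟨ht₀, le_rfl⟩), inv_div] at hinv
  linarith [Real.sqrt_nonneg (c₂ / c₁)]
end

section
/- Pole-shifting consequence of Kalman: Let D ∈ ℝ^{n×n} and E ∈ ℝ^{n×m} satisfy the Kalman rank condition rank(E, DE, ..., D^{n−1}E) = n. Then there exists K ∈ ℝ^{m×n} such that every eigenvalue of D + E K equals −1 (i.e., the characteristic polynomial of D + E K is (X+1)^n). -/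
/-!
A matrix `M` has characteristic polynomial `(X + 1) ^ n` exactly when `M + 1` is nilpotent, and the
Kalman rank condition says that no proper `D`-invariant subspace contains the columns of `E`, a
property that `D + 1` inherits. So it suffices to make `A + E K` nilpotent for such a pair `(A, E)`.

Heymann's lemma reduces this to a single input: greedily extend a trajectory
`x_{i+1} = A x_i + E u_i` from `x_0 = 0` so that `x_1, …, x_n` stay independent (a proper span
would otherwise be `A`-invariant and contain the columns of `E`); the feedback `F x_{i+1} = u_{i+1}`
then makes `E u_0` a cyclic vector of `A + E F`.

For a cyclic vector `b` of `A` with characteristic polynomial `∑ aᵢ Xⁱ`, the Horner vectors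
`y_j = q_j(A) b`, where `q_0 = 1` and `q_{j+1} = X q_j + a_{n-1-j}`, are unitriangular in the basis
`Aⁱ b`, and `y_n = 0` by Cayley–Hamilton. The functional `ℓ (y_j) = a_{n-1-j}` turns `A + b ℓ` into
the shift `y_j ↦ y_{j+1}`, which is nilpotent.
-/

/-- The Kalman controllability matrix `(E, DE, …, D^{steps-1}E)`,
with column blocks indexed by `Fin steps`. -/
noncomputable def kalmanMatrix {k l : Type*} [Fintype k] [DecidableEq k] [Fintype l]
    (steps : ℕ) (D : Matrix k k ℝ) (E : Matrix k l ℝ) :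
    Matrix k (Fin steps × l) ℝ :=
  Matrix.of fun i p => (D ^ (p.1 : ℕ) * E) i p.2

open Polynomial Module Submodule

section Charpoly

variable {K V : Type*} [Field K] [AddCommGroup V] [Module K V] [FiniteDimensional K V]

lemma LinearMap.charpoly_eq_X_add_C_pow_of_isNilpotent {f : Module.End K V} (μ : K)
    (h : IsNilpotent (f + μ • 1)) : f.charpoly = (X + C μ) ^ finrank K V := by
  have := LinearMap.charpoly_sub_smul (f + μ • 1) μ
  rw [add_sub_cancel_right, h.charpoly_eq_X_pow_finrank] at this
  rw [this, pow_comp, X_comp]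

end Charpoly

section Controllability

variable {K V U : Type*} [Field K] [AddCommGroup V] [Module K V] [AddCommGroup U] [Module K U]

def IsControllable (A : Module.End K V) (B : U →ₗ[K] V) : Prop :=
  ∀ S ∈ A.invtSubmodule, LinearMap.range B ≤ S → S = ⊤

lemma IsControllable.add_smul_one {A : Module.End K V} {B : U →ₗ[K] V} (h : IsControllable A B)
    (c : K) : IsControllable (A + c • 1) B := by
  intro S hS hB
  refine h S (fun v hv ↦ ?_) hB
  have : A v = (A + c • 1) v - c • v := by simp
  rw [mem_comap, this]
  exact S.sub_mem (hS hv) (S.smul_mem c hv)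

end Controllability

lemma isControllable_of_rank_kalmanMatrix {k l : Type*} [Fintype k] [DecidableEq k] [Fintype l]
    [DecidableEq l] {steps : ℕ} {D : Matrix k k ℝ} {E : Matrix k l ℝ}
    (hK : (kalmanMatrix steps D E).rank = Fintype.card k) :
    IsControllable (Matrix.toLin' D) (Matrix.toLin' E) := by
  intro S hS hE
  have hcols : span ℝ (Set.range (kalmanMatrix steps D E).col) = ⊤ :=
    eq_top_of_finrank_eq <| by
      rw [← Matrix.rank_eq_finrank_span_cols, hK, finrank_fintype_fun_eq_card]
  rw [eq_top_iff, ← hcols, span_le]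
  rintro _ ⟨⟨p, j⟩, rfl⟩
  have hcol : (kalmanMatrix steps D E).col (p, j) = (Matrix.toLin' D ^ (p : ℕ)) (E.col j) := by
    ext i
    simp [kalmanMatrix, ← Matrix.toLin'_pow, Matrix.mul_apply, Matrix.mulVec, dotProduct]
  rw [hcol]
  refine End.pow_apply_mem_of_forall_mem _ hS _ (hE ⟨Pi.single j 1, ?_⟩)
  simp

section Trajectory

variable {K V U : Type*} [Field K] [AddCommGroup V] [Module K V] [AddCommGroup U] [Module K U]
  {A : Module.End K V} {B : U →ₗ[K] V}

variable (A B) in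
def controlTrajectory (u : ℕ → U) : ℕ → V
  | 0 => 0
  | i + 1 => A (controlTrajectory u i) + B (u i)

lemma controlTrajectory_congr {u u' : ℕ → U} {i : ℕ} (h : ∀ j < i, u j = u' j) :
    controlTrajectory A B u i = controlTrajectory A B u' i := by
  induction i with
  | zero => rfl
  | succ i ih =>
    simp only [controlTrajectory, ih fun j hj ↦ h j (by omega), h i (by omega)]

lemma IsControllable.exists_add_notMem_span (h : IsControllable A B) (u : ℕ → U) {k : ℕ}
    (hk : span K (Set.range fun i : Fin k ↦ controlTrajectory A B u (i + 1)) ≠ ⊤) :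
    ∃ w, A (controlTrajectory A B u k) + B w ∉
      span K (Set.range fun i : Fin k ↦ controlTrajectory A B u (i + 1)) := by
  set S := span K (Set.range fun i : Fin k ↦ controlTrajectory A B u (i + 1))
  by_contra! hall
  have hAx : A (controlTrajectory A B u k) ∈ S := by simpa using hall 0
  have hB : LinearMap.range B ≤ S := by
    rintro _ ⟨w, rfl⟩
    simpa using S.sub_mem (hall w) hAx
  refine hk (h S ?_ hB)
  rw [End.mem_invtSubmodule, span_le]
  rintro _ ⟨i, rfl⟩
  rw [SetLike.mem_coe, mem_comap]
  obtain hi | hi : (i : ℕ) + 1 < k ∨ (i : ℕ) + 1 = k := by omega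
  · have hnext : controlTrajectory A B u (i + 1 + 1) ∈ S := subset_span ⟨⟨i + 1, hi⟩, rfl⟩
    have : A (controlTrajectory A B u (i + 1)) =
        controlTrajectory A B u (i + 1 + 1) - B (u (i + 1)) := by
      simp [controlTrajectory]
    rw [this]
    exact S.sub_mem hnext (hB ⟨_, rfl⟩)
  · show A (controlTrajectory A B u (i + 1)) ∈ S
    rwa [hi]

lemma IsControllable.exists_linearIndependent_controlTrajectory (h : IsControllable A B) :
    ∀ k ≤ finrank K V, ∃ u : ℕ → U,
      LinearIndependent K fun i : Fin k ↦ controlTrajectory A B u (i + 1) := by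
  intro k
  induction k with
  | zero => exact fun _ ↦ ⟨0, linearIndependent_empty_type⟩
  | succ k ih =>
    intro hk
    obtain ⟨u, hu⟩ := ih (by omega)
    have hS : span K (Set.range fun i : Fin k ↦ controlTrajectory A B u (i + 1)) ≠ ⊤ := by
      intro htop
      have := finrank_span_eq_card hu
      rw [htop, finrank_top, Fintype.card_fin] at this
      omega
    obtain ⟨w, hw⟩ := h.exists_add_notMem_span u hS
    refine ⟨Function.update u k w, ?_⟩
    have hprefix : ∀ i ≤ k, controlTrajectory A B (Function.update u k w) i =
        controlTrajectory A B u i := fun i hi ↦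
      controlTrajectory_congr fun j hj ↦ Function.update_of_ne (by omega) _ _
    have hsnoc : (fun i : Fin (k + 1) ↦ controlTrajectory A B (Function.update u k w) (i + 1)) =
        Fin.snoc (fun i : Fin k ↦ controlTrajectory A B u (i + 1))
          (A (controlTrajectory A B u k) + B w) := by
      funext i
      refine Fin.lastCases ?_ (fun j ↦ ?_) i
      · simp [controlTrajectory, hprefix k le_rfl]
      · simp [hprefix (j + 1) j.2]
    rw [hsnoc, linearIndependent_finSnoc]
    exact ⟨hu, hw⟩

end Trajectory

section Heymann

variable {K V U : Type*} [Field K] [AddCommGroup V] [Module K V] [AddCommGroup U] [Module K U]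
  [FiniteDimensional K V] {A : Module.End K V} {B : U →ₗ[K] V}

lemma IsControllable.exists_feedback_linearIndependent_pow_apply (h : IsControllable A B) :
    ∃ (F : V →ₗ[K] U) (u₀ : U),
      LinearIndependent K fun i : Fin (finrank K V) ↦ ((A + B ∘ₗ F) ^ (i : ℕ)) (B u₀) := by
  obtain ⟨u, hu⟩ := h.exists_linearIndependent_controlTrajectory _ le_rfl
  set x := controlTrajectory A B u
  let b := basisOfLinearIndependentOfCardEqFinrank' _ hu (Fintype.card_fin _)
  let F : V →ₗ[K] U := b.constr K fun i ↦ u (i + 1)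
  have hstep : ∀ i < finrank K V, (A + B ∘ₗ F) (x (i + 1)) = x (i + 1 + 1) := by
    intro i hi
    have hb : b ⟨i, hi⟩ = x (i + 1) := by simp [b]
    have hF : F (x (i + 1)) = u (i + 1) := hb ▸ b.constr_basis K _ _
    simp only [LinearMap.add_apply, LinearMap.comp_apply, hF]
    rfl
  have hpow : ∀ i < finrank K V, ((A + B ∘ₗ F) ^ i) (B (u 0)) = x (i + 1) := by
    intro i hi
    induction i with
    | zero => simp [x, controlTrajectory]
    | succ i ih => rw [pow_succ', Module.End.mul_apply, ih (by omega), hstep i (by omega)]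
  refine ⟨F, u 0, ?_⟩
  convert hu using 2 with i
  exact hpow i i.2

end Heymann

section SpanningFamilies

variable {R M : Type*} [Ring R] [AddCommGroup M] [Module R M]

lemma span_range_le_of_sub_mem_span_image_Iio {ι : Type*} [Preorder ι] [WellFoundedLT ι]
    {v y : ι → M} (h : ∀ j, y j - v j ∈ span R (v '' Set.Iio j)) :
    span R (Set.range v) ≤ span R (Set.range y) := by
  rw [span_le]
  rintro _ ⟨j, rfl⟩
  induction j using WellFoundedLT.induction with
  | _ j ih =>
    have hlower : span R (v '' Set.Iio j) ≤ span R (Set.range y) := by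
      rw [span_le]
      rintro _ ⟨i, hi, rfl⟩
      exact ih i hi
    rw [SetLike.mem_coe, ← sub_sub_cancel (y j) (v j)]
    exact sub_mem (subset_span ⟨j, rfl⟩) (hlower (h j))

lemma Module.End.pow_eq_zero_of_apply_eq_succ {N : Module.End R M} {y : ℕ → M} {n : ℕ}
    (hspan : span R (Set.range fun j : Fin n ↦ y j) = ⊤) (hN : ∀ j < n, N (y j) = y (j + 1))
    (hn : y n = 0) : N ^ n = 0 := by
  have hshift : ∀ i j, i + j ≤ n → (N ^ i) (y j) = y (i + j) := by
    intro i
    induction i with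
    | zero => simp
    | succ i ih =>
      intro j hij
      rw [pow_succ, Module.End.mul_apply, hN j (by omega), ih (j + 1) (by omega)]
      ring_nf
  refine LinearMap.ext_on_range hspan fun j ↦ ?_
  calc (N ^ n) (y j) = (N ^ (j : ℕ)) ((N ^ (n - j)) (y j)) := by
        rw [← Module.End.mul_apply, ← pow_add, Nat.add_sub_cancel' j.2.le]
    _ = 0 := by rw [hshift _ _ (by omega), Nat.sub_add_cancel j.2.le, hn, map_zero]

end SpanningFamilies

section SingleInput

variable {K V : Type*} [Field K] [AddCommGroup V] [Module K V] [FiniteDimensional K V]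

noncomputable def hornerSeq (A : Module.End K V) (b : V) (j : ℕ) : V :=
  ∑ i ∈ Finset.range (j + 1), A.charpoly.coeff (finrank K V - j + i) • (A ^ i) b

variable (A : Module.End K V) (b : V)

lemma hornerSeq_succ {j : ℕ} (hj : j < finrank K V) :
    hornerSeq A b (j + 1) = A (hornerSeq A b j) + A.charpoly.coeff (finrank K V - 1 - j) • b := by
  rw [hornerSeq, Finset.sum_range_succ', hornerSeq, map_sum]
  congr 1
  · refine Finset.sum_congr rfl fun i _ ↦ ?_
    rw [LinearMap.map_smul, pow_succ', Module.End.mul_apply]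
    congr 2
    omega
  · rw [pow_zero, Module.End.one_apply]
    congr 2
    omega

lemma hornerSeq_finrank : hornerSeq A b (finrank K V) = 0 := by
  have := congrArg (· b) (A.aeval_self_charpoly)
  simpa [aeval_eq_sum_range, LinearMap.charpoly_natDegree, hornerSeq] using this

lemma hornerSeq_sub_pow_apply_mem (j : Fin (finrank K V)) :
    hornerSeq A b j - (A ^ (j : ℕ)) b ∈
      span K ((fun i : Fin (finrank K V) ↦ (A ^ (i : ℕ)) b) '' Set.Iio j) := by
  have hlead : A.charpoly.coeff (finrank K V) = 1 := by
    simpa [LinearMap.charpoly_natDegree] using A.charpoly_monic.coeff_natDegree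
  rw [hornerSeq, Finset.sum_range_succ, Nat.sub_add_cancel j.2.le, hlead, one_smul,
    add_sub_cancel_right]
  refine sum_mem fun i hi ↦ smul_mem _ _ (subset_span ⟨⟨i, ?_⟩, ?_, rfl⟩)
  · have := Finset.mem_range.1 hi
    omega
  · simpa [Fin.lt_def] using hi

lemma exists_isNilpotent_add_smulRight
    (hb : LinearIndependent K fun i : Fin (finrank K V) ↦ (A ^ (i : ℕ)) b) :
    ∃ ℓ : V →ₗ[K] K, IsNilpotent (A + ℓ.smulRight b) := by
  have hspan : span K (Set.range fun j : Fin (finrank K V) ↦ hornerSeq A b j) = ⊤ := by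
    rw [eq_top_iff, ← hb.span_eq_top_of_card_eq_finrank' (Fintype.card_fin _)]
    exact span_range_le_of_sub_mem_span_image_Iio (hornerSeq_sub_pow_apply_mem A b)
  let y := basisOfTopLeSpanOfCardEqFinrank _ hspan.ge (Fintype.card_fin _)
  let ℓ := y.constr K fun j ↦ A.charpoly.coeff (finrank K V - 1 - j)
  refine ⟨ℓ, finrank K V, End.pow_eq_zero_of_apply_eq_succ hspan (fun j hj ↦ ?_)
    (hornerSeq_finrank A b)⟩
  have hy : y ⟨j, hj⟩ = hornerSeq A b j := by simp [y]
  have hℓ : ℓ (hornerSeq A b j) = A.charpoly.coeff (finrank K V - 1 - j) :=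
    hy ▸ y.constr_basis K _ _
  rw [LinearMap.add_apply, LinearMap.smulRight_apply, hℓ, hornerSeq_succ A b hj]

end SingleInput

theorem stmt12_general (n m : ℕ)
    (D : Matrix (Fin n) (Fin n) ℝ) (E : Matrix (Fin n) (Fin m) ℝ)
    (hK : (kalmanMatrix n D E).rank = n) :
    ∃ K : Matrix (Fin m) (Fin n) ℝ,
      (D + E * K).charpoly = (Polynomial.X + 1) ^ n := by
  set A := Matrix.toLin' D + (1 : ℝ) • 1
  set B := Matrix.toLin' E
  have hc : IsControllable A B :=
    (isControllable_of_rank_kalmanMatrix (hK.trans (Fintype.card_fin n).symm)).add_smul_one 1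
  obtain ⟨F, u₀, hcyc⟩ := hc.exists_feedback_linearIndependent_pow_apply
  obtain ⟨ℓ, hnil⟩ := exists_isNilpotent_add_smulRight _ _ hcyc
  refine ⟨LinearMap.toMatrix' (F + ℓ.smulRight u₀), ?_⟩
  have hclosed : Matrix.toLin' (D + E * LinearMap.toMatrix' (F + ℓ.smulRight u₀)) + (1 : ℝ) • 1 =
      A + B ∘ₗ F + ℓ.smulRight (B u₀) := by
    refine LinearMap.ext fun v ↦ ?_
    simp only [map_add, Matrix.toLin'_mul, Matrix.toLin'_toMatrix', one_smul, LinearMap.add_apply,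
      Matrix.toLin'_apply, LinearMap.coe_comp, Function.comp_apply, LinearMap.coe_smulRight,
      Matrix.mulVec_smul, End.one_apply, A, B]
    abel
  rw [← Matrix.charpoly_toLin',
    LinearMap.charpoly_eq_X_add_C_pow_of_isNilpotent 1 (hclosed ▸ hnil), finrank_fin_fun, map_one]

theorem stmt12 (n m : ℕ) (hn : 1 ≤ n) (hm : 1 ≤ m)
    (D : Matrix (Fin n) (Fin n) ℝ) (E : Matrix (Fin n) (Fin m) ℝ)
    (hK : (kalmanMatrix n D E).rank = n) :
    ∃ K : Matrix (Fin m) (Fin n) ℝ,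
      (D + E * K).charpoly = (Polynomial.X + 1) ^ n :=
  stmt12_general n m D E hK
end

section
/- Equivalence of stabilization and weak observability in an abstract Hilbert space setting: Let X, Y be Hilbert spaces, S ∈ L(Y;Y) (the solution operator), A ∈ L(X;Y) (the control-to-state map), and C, ε ≥ 0. Then the following are equivalent: (1) for every z₀ ∈ Y there exists ζ ∈ X with ‖S z₀ + A ζ‖ ≤ ε ‖z₀‖ and ‖ζ‖ ≤ C ‖z₀‖; (2) for every w ∈ Y, ⟨w, S z₀⟩ ≤ C ‖z₀‖ ‖A* w‖ + ε ‖z₀‖ ‖w‖ holds for all z₀ ∈ Y, i.e. ‖S* w‖ ≤ C ‖A* w‖ + ε ‖w‖ for all w ∈ Y. -/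
/-!
(1) ⇒ (2): test the control of `z₀ = S* w` against `w`, which bounds `‖S* w‖²` by
`(C ‖A* w‖ + ε ‖w‖) ‖S* w‖`.

(2) ⇒ (1): closed balls of a Hilbert space are weakly compact (Banach–Alaoglu transported by the
Riesz isomorphism), so `K = A (B̄(0, C ‖z₀‖))` is a closed convex set. Let `A ζ` be the projection
of `-S z₀` onto `K` and `w = -S z₀ - A ζ`. The variational inequality says that `⟪w, A ζ⟫` is the
support function of `K` at `w`, namely `C ‖z₀‖ ‖A* w‖`, and then (2) yields
`‖w‖² ≤ ε ‖z₀‖ ‖w‖`.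
-/

open ContinuousLinearMap Metric

open scoped RealInnerProductSpace

theorem isCompact_toWeakSpace_closedBall {X : Type*} [NormedAddCommGroup X]
    [InnerProductSpace ℝ X] [CompleteSpace X] (x : X) (r : ℝ) :
    IsCompact (toWeakSpace ℝ X '' closedBall x r) := by
  set e := InnerProductSpace.toDual ℝ X
  have hcont : Continuous (toWeakSpace ℝ X ∘ e.symm ∘ WeakDual.toStrongDual) := by
    refine WeakBilin.continuous_of_continuous_eval _ fun ℓ : StrongDual ℝ X => ?_
    have heval : ∀ φ : WeakDual ℝ X, φ (e.symm ℓ) = ℓ (e.symm (WeakDual.toStrongDual φ)) := by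
      intro φ
      rw [← InnerProductSpace.toDual_symm_apply, real_inner_comm,
        InnerProductSpace.toDual_symm_apply]
      rfl
    exact (WeakDual.eval_continuous (e.symm ℓ)).congr heval
  convert (WeakDual.isCompact_closedBall (e x) r).image hcont using 1
  rw [Set.image_comp, Set.image_comp, Set.image_preimage_eq _ WeakDual.toStrongDual.surjective,
    LinearIsometryEquiv.image_closedBall, LinearIsometryEquiv.symm_apply_apply]

theorem ContinuousLinearMap.isClosed_image_of_isCompact_toWeakSpace {X Y : Type*}
    [NormedAddCommGroup X] [NormedSpace ℝ X] [NormedAddCommGroup Y] [NormedSpace ℝ Y]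
    (A : X →L[ℝ] Y) {s : Set X} (hs : IsCompact (toWeakSpace ℝ X '' s)) :
    IsClosed (A '' s) := by
  have hclosed := (hs.image (WeakSpace.map A).continuous).isClosed
  rw [← Set.image_comp] at hclosed
  exact hclosed.preimage (toWeakSpaceCLM ℝ Y).continuous

theorem ContinuousLinearMap.isClosed_image_closedBall {X Y : Type*}
    [NormedAddCommGroup X] [InnerProductSpace ℝ X] [CompleteSpace X]
    [NormedAddCommGroup Y] [NormedSpace ℝ Y] (A : X →L[ℝ] Y) (x : X) (r : ℝ) :
    IsClosed (A '' closedBall x r) :=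
  A.isClosed_image_of_isCompact_toWeakSpace (isCompact_toWeakSpace_closedBall x r)

theorem exists_norm_le_inner_eq {X : Type*} [NormedAddCommGroup X] [InnerProductSpace ℝ X]
    (u : X) {R : ℝ} (hR : 0 ≤ R) : ∃ ζ : X, ‖ζ‖ ≤ R ∧ ⟪u, ζ⟫ = R * ‖u‖ := by
  obtain rfl | hu := eq_or_ne u 0
  · exact ⟨0, by simpa using hR, by simp⟩
  have hu : 0 < ‖u‖ := norm_pos_iff.mpr hu
  refine ⟨(R / ‖u‖) • u, ?_, ?_⟩
  · rw [norm_smul, Real.norm_of_nonneg (by positivity), div_mul_cancel₀ _ hu.ne']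
  · rw [real_inner_smul_right, real_inner_self_eq_norm_sq]
    field_simp

section Controllability

variable {X Y Z : Type*}
  [NormedAddCommGroup X] [InnerProductSpace ℝ X] [CompleteSpace X]
  [NormedAddCommGroup Y] [InnerProductSpace ℝ Y] [CompleteSpace Y]
  [NormedAddCommGroup Z] [InnerProductSpace ℝ Z] [CompleteSpace Z]

def ApproxControllable (S : Z →L[ℝ] Y) (A : X →L[ℝ] Y) (C ε : ℝ) : Prop :=
  ∀ z₀ : Z, ∃ ζ : X, ‖S z₀ + A ζ‖ ≤ ε * ‖z₀‖ ∧ ‖ζ‖ ≤ C * ‖z₀‖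

theorem ApproxControllable.norm_adjoint_le {S : Z →L[ℝ] Y} {A : X →L[ℝ] Y} {C ε : ℝ}
    (h : ApproxControllable S A C ε) (hC : 0 ≤ C) (hε : 0 ≤ ε) (w : Y) :
    ‖adjoint S w‖ ≤ C * ‖adjoint A w‖ + ε * ‖w‖ := by
  set z₀ := adjoint S w
  obtain ⟨ζ, hres, hcost⟩ := h z₀
  have key : ‖z₀‖ ^ 2 ≤ (C * ‖adjoint A w‖ + ε * ‖w‖) * ‖z₀‖ :=
    calc ‖z₀‖ ^ 2 = ⟪w, S z₀ + A ζ⟫ + ⟪adjoint A w, -ζ⟫ := by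
          rw [inner_add_right, inner_neg_right, adjoint_inner_left, ← adjoint_inner_left,
            real_inner_self_eq_norm_sq]
          ring
      _ ≤ ‖w‖ * ‖S z₀ + A ζ‖ + ‖adjoint A w‖ * ‖-ζ‖ :=
          add_le_add (real_inner_le_norm _ _) (real_inner_le_norm _ _)
      _ ≤ ‖w‖ * (ε * ‖z₀‖) + ‖adjoint A w‖ * (C * ‖z₀‖) := by
          rw [norm_neg]
          gcongr
      _ = (C * ‖adjoint A w‖ + ε * ‖w‖) * ‖z₀‖ := by ring
  have hbound : 0 ≤ C * ‖adjoint A w‖ + ε * ‖w‖ := by positivity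
  nlinarith [norm_nonneg z₀]

theorem approxControllable_of_norm_adjoint_le {S : Z →L[ℝ] Y} {A : X →L[ℝ] Y} {C ε : ℝ}
    (hC : 0 ≤ C) (hε : 0 ≤ ε) (hobs : ∀ w, ‖adjoint S w‖ ≤ C * ‖adjoint A w‖ + ε * ‖w‖) :
    ApproxControllable S A C ε := by
  intro z₀
  set R := C * ‖z₀‖
  have hR : 0 ≤ R := by positivity
  set K := A '' closedBall 0 R
  have hKne : K.Nonempty := ⟨A 0, 0, mem_closedBall_self hR, rfl⟩
  have hKconv : Convex ℝ K := (convex_closedBall 0 R).linear_image (A : X →ₗ[ℝ] Y)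
  obtain ⟨v, ⟨ζ, hζ, rfl⟩, hmin⟩ := exists_norm_eq_iInf_of_complete_convex hKne
    (A.isClosed_image_closedBall 0 R).isComplete hKconv (-S z₀)
  set w := -S z₀ - A ζ
  have hvar : ∀ u ∈ K, ⟪w, u - A ζ⟫ ≤ 0 :=
    (norm_eq_iInf_iff_real_inner_le_zero hKconv ⟨ζ, hζ, rfl⟩).mp hmin
  have hsupp : R * ‖adjoint A w‖ ≤ ⟪w, A ζ⟫ := by
    obtain ⟨ξ, hξ, hξw⟩ := exists_norm_le_inner_eq (adjoint A w) hR
    have := hvar (A ξ) ⟨ξ, mem_closedBall_zero_iff.mpr hξ, rfl⟩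
    rw [inner_sub_right, ← adjoint_inner_left, hξw] at this
    linarith
  have hw : ‖w‖ ^ 2 ≤ ε * ‖z₀‖ * ‖w‖ :=
    calc ‖w‖ ^ 2 = ⟪adjoint S w, -z₀⟫ - ⟪w, A ζ⟫ := by
          rw [adjoint_inner_left, map_neg, ← real_inner_self_eq_norm_sq, inner_sub_right]
      _ ≤ ‖adjoint S w‖ * ‖z₀‖ - R * ‖adjoint A w‖ := by
          gcongr
          simpa using real_inner_le_norm (adjoint S w) (-z₀)
      _ ≤ (C * ‖adjoint A w‖ + ε * ‖w‖) * ‖z₀‖ - R * ‖adjoint A w‖ := by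
          gcongr
          exact hobs w
      _ = ε * ‖z₀‖ * ‖w‖ := by ring
  refine ⟨ζ, ?_, mem_closedBall_zero_iff.mp hζ⟩
  rw [← norm_neg, neg_add']
  change ‖w‖ ≤ ε * ‖z₀‖
  nlinarith [norm_nonneg w, mul_nonneg hε (norm_nonneg z₀)]

end Controllability

theorem stmt19 {X Y : Type*}
    [NormedAddCommGroup X] [InnerProductSpace ℝ X] [CompleteSpace X]
    [NormedAddCommGroup Y] [InnerProductSpace ℝ Y] [CompleteSpace Y]
    (S : Y →L[ℝ] Y) (A : X →L[ℝ] Y) (C ε : ℝ) (hC : 0 ≤ C) (hε : 0 ≤ ε) :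
    (∀ z₀ : Y, ∃ ζ : X, ‖S z₀ + A ζ‖ ≤ ε * ‖z₀‖ ∧ ‖ζ‖ ≤ C * ‖z₀‖) ↔
      ∀ w : Y, ‖(adjoint S) w‖ ≤ C * ‖(adjoint A) w‖ + ε * ‖w‖ :=
  ⟨fun h => ApproxControllable.norm_adjoint_le h hC hε,
    approxControllable_of_norm_adjoint_le hC hε⟩
end
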